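/- Assume a feasible matrix Z exists (single set of marginals, k = 1). For every ε > 0 there exists an iteration index t with 0 ≤ t ≤ 2h²·log(1 + 2Δ/α)/ε² + 1 such that either ‖v⁽ᵗ⁾ − v‖₁ ≤ ε or ‖u⁽ᵗ⁾ − u‖₁ ≤ ε. (Theorem 3.1: the classic Sinkhorn algorithm for a single set of marginals reaches L₁ error at most ε within O(h²·log(Δ/α)/ε²) iterations.) -/

import Mathlib

open Finset

noncomputable section

/-- Row normalization step of the classic (single-set) Sinkhorn algorithm. -/
def rowNorm1 {m n : ℕ} (u : Fin n → ℝ) (v : Fin m → ℝ)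
    (G : Matrix (Fin m) (Fin n) ℝ) : Matrix (Fin m) (Fin n) ℝ :=
  fun i j => G i j * v i / ∑ j', G i j' * u j'

/-- Column normalization step of the classic Sinkhorn algorithm (columns with
`u j = 0` are left untouched). -/
def colNorm1 {m n : ℕ} (u : Fin n → ℝ)
    (G : Matrix (Fin m) (Fin n) ℝ) : Matrix (Fin m) (Fin n) ℝ :=
  fun i j => if 0 < u j then G i j * u j / ∑ i', G i' j * u j else G i j

/-- The classic Sinkhorn iterates Γ⁽ᵗ⁾. -/
def Gamma1 {m n : ℕ} (S : Matrix (Fin m) (Fin n) ℝ) (u : Fin n → ℝ)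
    (v : Fin m → ℝ) : ℕ → Matrix (Fin m) (Fin n) ℝ
  | 0 => fun i j => S i j / ∑ i', S i' j
  | t + 1 => colNorm1 u (rowNorm1 u v (Gamma1 S u v t))

/-- The row-normalized classic Sinkhorn iterates Γ'⁽ᵗ⁾. -/
def Gamma1' {m n : ℕ} (S : Matrix (Fin m) (Fin n) ℝ) (u : Fin n → ℝ)
    (v : Fin m → ℝ) (t : ℕ) : Matrix (Fin m) (Fin n) ℝ :=
  rowNorm1 u v (Gamma1 S u v t)

/-- A feasible matrix Z ∈ [0,1]^{m×n}: supported where S is, columns summing to 1, and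
realizing the marginals (u, v). -/
def Feasible1 {m n : ℕ} (S : Matrix (Fin m) (Fin n) ℝ) (u : Fin n → ℝ)
    (v : Fin m → ℝ) (Z : Matrix (Fin m) (Fin n) ℝ) : Prop :=
  (∀ i j, Z i j ∈ Set.Icc (0 : ℝ) 1) ∧ (∀ i j, S i j = 0 → Z i j = 0) ∧
    (∀ j, ∑ i, Z i j = 1) ∧ (∀ i, ∑ j, Z i j * u j = v i)

/-- α = (smallest positive entry of S) / (largest entry of S). -/
def alphaS {m n : ℕ} (S : Matrix (Fin m) (Fin n) ℝ) : ℝ :=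
  sInf {x : ℝ | 0 < x ∧ ∃ i j, S i j = x} / sSup {x : ℝ | ∃ i j, S i j = x}

/-- Δ = the maximum number of positive entries in any column of S. -/
def DeltaS {m n : ℕ} (S : Matrix (Fin m) (Fin n) ℝ) : ℕ :=
  Finset.univ.sup fun j => Nat.card {i : Fin m // 0 < S i j}



/-- `(x+1) log x - 2(x-1)` is monotone on `(0,∞)`. -/
private lemma sinkhorn_G_mono : MonotoneOn (fun x : ℝ => (x + 1) * Real.log x - 2 * (x - 1)) (Set.Ioi 0) := by
  have hderiv : ∀ x ∈ interior (Set.Ioi (0:ℝ)),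
      0 ≤ deriv (fun x : ℝ => (x + 1) * Real.log x - 2 * (x - 1)) x := by
    intro x hx
    rw [interior_Ioi] at hx
    have hx0 : (0:ℝ) < x := hx
    have h1 : HasDerivAt (fun x : ℝ => (x + 1) * Real.log x - 2 * (x - 1))
        (Real.log x + (x + 1) * x⁻¹ - 2) x := by
      have := ((hasDerivAt_id x).add_const 1).mul (Real.hasDerivAt_log hx0.ne')
      exact (this.sub (((hasDerivAt_id x).sub_const 1).const_mul 2)).congr_deriv (by simp)
    rw [h1.deriv]
    have := Real.one_sub_inv_le_log_of_pos hx0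
    have hxi : (x+1) * x⁻¹ = 1 + x⁻¹ := by field_simp
    rw [hxi]; linarith
  apply monotoneOn_of_deriv_nonneg (convex_Ioi 0) _ _ hderiv
  · apply ContinuousOn.sub
    · exact (continuousOn_id.add continuousOn_const).mul
        (Real.continuousOn_log.mono (by intro x hx; exact ne_of_gt hx))
    · fun_prop
  · intro x hx
    rw [interior_Ioi] at hx
    exact (((hasDerivAt_id x).add_const 1).mul (Real.hasDerivAt_log (ne_of_gt hx))).sub
      (((hasDerivAt_id x).sub_const 1).const_mul 2) |>.differentiableAt.differentiableWithinAt

private lemma sinkhorn_F_hasDeriv {x : ℝ} (hx : 0 < x) :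
    HasDerivAt (fun x : ℝ => 2 * (x + 2) * (x * Real.log x - x + 1) - 3 * (x - 1) ^ 2)
      (4 * ((x + 1) * Real.log x - 2 * (x - 1))) x := by
  have h1 : HasDerivAt (fun x : ℝ => x * Real.log x - x + 1) (Real.log x) x := by
    simpa using ((Real.hasDerivAt_mul_log hx.ne').sub (hasDerivAt_id x)).add_const 1
  have h2 : HasDerivAt (fun x : ℝ => 2 * (x + 2)) 2 x := by
    simpa using ((hasDerivAt_id x).add_const 2).const_mul 2
  have h3 := h2.mul h1
  have h4 : HasDerivAt (fun x : ℝ => 3 * (x - 1) ^ 2) (3 * (2 * (x - 1))) x := by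
    simpa using (((hasDerivAt_id x).sub_const 1).pow 2).const_mul 3
  have h5 := h3.sub h4
  exact h5.congr_deriv (by ring)

private lemma sinkhorn_F_nonneg {x : ℝ} (hx : 0 ≤ x) :
    0 ≤ 2 * (x + 2) * (x * Real.log x - x + 1) - 3 * (x - 1) ^ 2 := by
  set F : ℝ → ℝ := fun x => 2 * (x + 2) * (x * Real.log x - x + 1) - 3 * (x - 1) ^ 2 with hF
  have hF1 : F 1 = 0 := by simp [hF]
  rcases eq_or_lt_of_le hx with rfl | hx0
  · simp [hF, Real.log_zero]; norm_num
  have hcont : ContinuousOn F (Set.Ioi 0) := fun y hy =>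
    (sinkhorn_F_hasDeriv hy).continuousAt.continuousWithinAt
  have hdiff : ∀ y ∈ Set.Ioi (0:ℝ), DifferentiableAt ℝ F y := fun y hy =>
    (sinkhorn_F_hasDeriv hy).differentiableAt
  rcases le_or_gt 1 x with h1x | hx1
  · -- monotone on [1, ∞)
    have hmono : MonotoneOn F (Set.Ici 1) := by
      apply monotoneOn_of_deriv_nonneg (convex_Ici 1)
        (hcont.mono (fun y hy => Set.mem_Ioi.2 (lt_of_lt_of_le one_pos (Set.mem_Ici.1 hy))))
      · intro y hy
        rw [interior_Ici] at hy
        exact (hdiff y (Set.mem_Ioi.2 (lt_trans one_pos (Set.mem_Ioi.1 hy)))).differentiableWithinAt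
      · intro y hy
        rw [interior_Ici] at hy
        rw [(sinkhorn_F_hasDeriv (lt_trans one_pos (Set.mem_Ioi.1 hy))).deriv]
        have := sinkhorn_G_mono (Set.mem_Ioi.2 one_pos) (Set.mem_Ioi.2 (lt_trans one_pos (Set.mem_Ioi.1 hy))) (Set.mem_Ioi.1 hy).le
        simp only [Real.log_one] at this
        nlinarith
    have := hmono (Set.mem_Ici.2 le_rfl) (Set.mem_Ici.2 h1x) h1x
    rw [hF1] at this; exact this
  · -- antitone on (0, 1]
    have hanti : AntitoneOn F (Set.Ioc 0 1) := by
      apply antitoneOn_of_deriv_nonpos (convex_Ioc 0 1) (hcont.mono Set.Ioc_subset_Ioi_self)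
      · intro y hy
        rw [interior_Ioc] at hy
        exact (hdiff y (Set.mem_Ioi.2 hy.1)).differentiableWithinAt
      · intro y hy
        rw [interior_Ioc] at hy
        rw [(sinkhorn_F_hasDeriv hy.1).deriv]
        have := sinkhorn_G_mono (Set.mem_Ioi.2 hy.1) (Set.mem_Ioi.2 one_pos) hy.2.le
        simp only [Real.log_one] at this
        nlinarith
    have := hanti (Set.mem_Ioc.2 ⟨hx0, hx1.le⟩) (Set.mem_Ioc.2 ⟨one_pos, le_rfl⟩) hx1.le
    rw [hF1] at this; exact this

/-- Pointwise refined lower bound for KL terms. -/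
private lemma sinkhorn_pointwise {p q : ℝ} (hp : 0 ≤ p) (hq : 0 ≤ q)
    (hpq : 0 < q ∨ p = 0) :
    3 * (p - q) ^ 2 / (2 * (p + 2 * q)) ≤ p * Real.log (p / q) - p + q := by
  rcases hpq with hq0 | rfl
  · set x := p / q with hxdef
    have hx : 0 ≤ x := div_nonneg hp hq
    have hp' : p = q * x := by have := hq0.ne'; rw [hxdef]; field_simp
    have hcore := sinkhorn_F_nonneg hx
    have hden : (0:ℝ) < 2 * (x + 2) := by linarith
    have h1 : 3 * (x - 1) ^ 2 / (2 * (x + 2)) ≤ x * Real.log x - x + 1 := by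
      rw [div_le_iff₀ hden]; nlinarith
    have h2 : p * Real.log (p / q) - p + q = q * (x * Real.log x - x + 1) := by
      have : q * (x * Real.log x - x + 1) = (q * x) * Real.log x - (q * x) + q := by ring
      rw [this, ← hp', hxdef]
    have hx2 : x + 2 ≠ 0 := by linarith
    have h3 : 3 * (p - q) ^ 2 / (2 * (p + 2 * q)) = q * (3 * (x - 1) ^ 2 / (2 * (x + 2))) := by
      rw [hp']
      field_simp
    rw [h2, h3]
    exact mul_le_mul_of_nonneg_left h1 hq0.le
  · rcases eq_or_lt_of_le hq with rfl | hq0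
    · norm_num
    · simp only [zero_sub, neg_sq, zero_mul, zero_sub, zero_add, zero_mul]
      rw [div_le_iff₀ (by linarith)]
      nlinarith

/-- Discrete Cauchy–Schwarz in the form needed. -/
private lemma sinkhorn_cs {ι : Type*} (s : Finset ι) (a b : ι → ℝ)
    (ha : ∀ i ∈ s, 0 ≤ a i) (hab : ∀ i ∈ s, a i = 0 → b i = 0) :
    (∑ i ∈ s, |b i|) ^ 2 ≤ (∑ i ∈ s, a i) * ∑ i ∈ s, (b i) ^ 2 / a i := by
  have key := sum_mul_sq_le_sq_mul_sq s (fun i => Real.sqrt (a i))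
    (fun i => |b i| / Real.sqrt (a i))
  have h1 : ∀ i ∈ s, Real.sqrt (a i) * (|b i| / Real.sqrt (a i)) = |b i| := by
    intro i hi
    rcases eq_or_lt_of_le (ha i hi) with h | h
    · rw [hab i hi h.symm]; simp
    · rw [mul_div_assoc']; rw [mul_comm, mul_div_assoc]
      rw [div_self (Real.sqrt_ne_zero'.2 h)]; ring
  have h2 : ∀ i ∈ s, (Real.sqrt (a i)) ^ 2 = a i := fun i hi => Real.sq_sqrt (ha i hi)
  have h3 : ∀ i ∈ s, (|b i| / Real.sqrt (a i)) ^ 2 = (b i) ^ 2 / a i := by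
    intro i hi
    rw [div_pow, sq_abs, Real.sq_sqrt (ha i hi)]
  calc (∑ i ∈ s, |b i|) ^ 2 = (∑ i ∈ s, Real.sqrt (a i) * (|b i| / Real.sqrt (a i))) ^ 2 := by
        rw [Finset.sum_congr rfl h1]
    _ ≤ (∑ i ∈ s, (Real.sqrt (a i)) ^ 2) * ∑ i ∈ s, (|b i| / Real.sqrt (a i)) ^ 2 := key
    _ = (∑ i ∈ s, a i) * ∑ i ∈ s, (b i) ^ 2 / a i := by
        rw [Finset.sum_congr rfl h2, Finset.sum_congr rfl h3]

/-- Pinsker's inequality for finite nonnegative vectors of equal mass. -/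
private lemma sinkhorn_pinsker {ι : Type*} (s : Finset ι) (p q : ι → ℝ)
    (hp : ∀ i ∈ s, 0 ≤ p i) (hq : ∀ i ∈ s, 0 ≤ q i)
    (hpq : ∀ i ∈ s, 0 < q i ∨ p i = 0)
    (hsum : ∑ i ∈ s, p i = ∑ i ∈ s, q i) :
    (∑ i ∈ s, |p i - q i|) ^ 2 ≤
      2 * (∑ i ∈ s, q i) * ∑ i ∈ s, p i * Real.log (p i / q i) := by
  set K := ∑ i ∈ s, p i * Real.log (p i / q i) with hK
  set H := ∑ i ∈ s, q i with hH
  have hH0 : 0 ≤ H := Finset.sum_nonneg hq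
  have hKeq : ∑ i ∈ s, (p i * Real.log (p i / q i) - p i + q i) = K := by
    rw [hK]
    rw [Finset.sum_add_distrib, Finset.sum_sub_distrib, hsum]
    ring
  have hptwise : ∀ i ∈ s, 3 * (p i - q i) ^ 2 / (2 * (p i + 2 * q i))
      ≤ p i * Real.log (p i / q i) - p i + q i :=
    fun i hi => sinkhorn_pointwise (hp i hi) (hq i hi) (hpq i hi)
  have hsum2 : ∑ i ∈ s, (p i - q i) ^ 2 / (p i + 2 * q i) ≤ (2/3) * K := by
    have := Finset.sum_le_sum hptwise
    rw [hKeq] at this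
    have heq : ∀ i ∈ s, 3 * (p i - q i) ^ 2 / (2 * (p i + 2 * q i)) =
        (3/2) * ((p i - q i) ^ 2 / (p i + 2 * q i)) := by
      intro i hi; rw [mul_comm (2:ℝ), ← div_div]; ring
    rw [Finset.sum_congr rfl heq, ← Finset.mul_sum] at this
    linarith
  have hcs := sinkhorn_cs s (fun i => p i + 2 * q i) (fun i => p i - q i)
    (fun i hi => by have := hp i hi; have := hq i hi; show 0 ≤ p i + 2 * q i; linarith)
    (fun i hi hz => by
      have := hp i hi; have := hq i hi
      have hz' : p i + 2 * q i = 0 := hz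
      show p i - q i = 0; linarith)
  have hsuma : ∑ i ∈ s, (p i + 2 * q i) = 3 * H := by
    rw [Finset.sum_add_distrib, hsum]
    rw [← Finset.mul_sum, ← hH]; ring
  have hnn : 0 ≤ ∑ i ∈ s, (p i - q i) ^ 2 / (p i + 2 * q i) :=
    Finset.sum_nonneg fun i hi => div_nonneg (sq_nonneg _)
      (by have := hp i hi; have := hq i hi; linarith)
  clear hnn
  calc (∑ i ∈ s, |p i - q i|) ^ 2
      ≤ (∑ i ∈ s, (p i + 2 * q i)) * ∑ i ∈ s, (p i - q i) ^ 2 / (p i + 2 * q i) := hcs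
    _ = 3 * H * ∑ i ∈ s, (p i - q i) ^ 2 / (p i + 2 * q i) := by rw [hsuma]
    _ ≤ 3 * H * ((2/3) * K) := by
        apply mul_le_mul_of_nonneg_left hsum2 (by linarith)
    _ = 2 * H * K := by ring

/-- KL nonnegativity for equal-mass nonnegative vectors. -/
private lemma sinkhorn_kl_nonneg {ι : Type*} (s : Finset ι) (p q : ι → ℝ)
    (hp : ∀ i ∈ s, 0 ≤ p i) (hq : ∀ i ∈ s, 0 ≤ q i)
    (hpq : ∀ i ∈ s, 0 < q i ∨ p i = 0)
    (hsum : ∑ i ∈ s, p i = ∑ i ∈ s, q i) :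
    0 ≤ ∑ i ∈ s, p i * Real.log (p i / q i) := by
  have hKeq : ∑ i ∈ s, (p i * Real.log (p i / q i) - p i + q i)
      = ∑ i ∈ s, p i * Real.log (p i / q i) := by
    rw [Finset.sum_add_distrib, Finset.sum_sub_distrib, hsum]; ring
  rw [← hKeq]
  apply Finset.sum_nonneg
  intro i hi
  refine le_trans ?_ (sinkhorn_pointwise (hp i hi) (hq i hi) (hpq i hi))
  apply div_nonneg (by positivity)
  have := hp i hi; have := hq i hi; linarith

/-- Theorem 3.1: for every ε > 0, within 2h²·log(1 + 2Δ/α)/ε² + 1 iterations the classic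
Sinkhorn algorithm reaches L₁ error at most ε to one of its target marginals. -/
theorem stmt5
    {m n : ℕ}
    (S : Matrix (Fin m) (Fin n) ℝ)
    (hS : ∀ i j, 0 ≤ S i j) (hScol : ∀ j, ∃ i, 0 < S i j)
    (u : Fin n → ℝ) (v : Fin m → ℝ)
    (hu : ∀ j, 0 ≤ u j) (hv : ∀ i, 0 < v i)
    (h : ℝ) (hh : 0 < h)
    (hvh : ∑ i, v i = h) (huh : ∑ j, u j = h)
    (Z : Matrix (Fin m) (Fin n) ℝ) (hZ : Feasible1 S u v Z)
    (ε : ℝ) (hε : 0 < ε) :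
    ∃ t : ℕ,
      (t : ℝ) ≤ 2 * h ^ 2 * Real.log (1 + 2 * (DeltaS S : ℝ) / alphaS S) / ε ^ 2 + 1 ∧
      ((∑ i, |(∑ j, Gamma1 S u v t i j * u j) - v i| ≤ ε) ∨
        (∑ j, |(∑ i, Gamma1' S u v t i j * u j) - u j| ≤ ε)) := by

  obtain ⟨hZ01, hZsupp, hZcol, hZmarg⟩ := hZ
  have hZ0 : ∀ i j, 0 ≤ Z i j := fun i j => (hZ01 i j).1
  have hZ1 : ∀ i j, Z i j ≤ 1 := fun i j => (hZ01 i j).2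
  have hZpos : ∀ i j, Z i j ≠ 0 → 0 < S i j := by
    intro i j hz
    rcases (hS i j).lt_or_eq with hlt | heq
    · exact hlt
    · exact absurd (hZsupp i j heq.symm) hz
  have hn : 0 < n := by
    rcases Nat.eq_zero_or_pos n with h0 | h1
    · subst h0; simp at huh; linarith
    · exact h1
  have hrow : ∀ i, ∃ j, 0 < u j ∧ 0 < S i j := by
    intro i
    by_contra hcon
    push_neg at hcon
    have hzero : ∑ j, Z i j * u j = 0 := by
      apply Finset.sum_eq_zero; intro j _
      by_cases hzu : u j = 0
      · rw [hzu, mul_zero]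
      · have hupos : 0 < u j := (hu j).lt_of_ne (Ne.symm hzu)
        have hSz : S i j = 0 := le_antisymm (hcon j hupos) (hS i j)
        rw [hZsupp i j hSz, zero_mul]
    rw [hZmarg i] at hzero; exact absurd hzero (hv i).ne'
  set G : ℕ → Matrix (Fin m) (Fin n) ℝ := Gamma1 S u v with hGdef
  set G' : ℕ → Matrix (Fin m) (Fin n) ℝ := fun t => rowNorm1 u v (G t) with hG'def
  have hG'eq : ∀ t, Gamma1' S u v t = G' t := fun t => rfl
  -- invariants
  have hInv : ∀ t, (∀ i j, 0 ≤ G t i j) ∧ (∀ i j, 0 < S i j → 0 < G t i j) ∧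
      (∀ j, 0 < u j → ∑ i, G t i j = 1) := by
    intro t
    induction t with
    | zero =>
      have hcolpos : ∀ j, 0 < ∑ i, S i j := by
        intro j
        obtain ⟨i0, hi0⟩ := hScol j
        exact Finset.sum_pos' (fun i _ => hS i j) ⟨i0, Finset.mem_univ i0, hi0⟩
      refine ⟨?_, ?_, ?_⟩
      · intro i j; exact div_nonneg (hS i j) (hcolpos j).le
      · intro i j hij; exact div_pos hij (hcolpos j)
      · intro j _
        show (∑ i, S i j / ∑ i', S i' j) = 1
        rw [← Finset.sum_div, div_self (hcolpos j).ne']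
    | succ t ih =>
      obtain ⟨ih0, ihpos, ihcol⟩ := ih
      have hrpos : ∀ i, 0 < ∑ j', G t i j' * u j' := by
        intro i
        obtain ⟨j1, hj1u, hj1S⟩ := hrow i
        exact Finset.sum_pos' (fun j _ => mul_nonneg (ih0 i j) (hu j))
          ⟨j1, Finset.mem_univ j1, mul_pos (ihpos i j1 hj1S) hj1u⟩
      have hG'0 : ∀ i j, 0 ≤ G' t i j := fun i j =>
        div_nonneg (mul_nonneg (ih0 i j) (hv i).le) (hrpos i).le
      have hG'pos : ∀ i j, 0 < S i j → 0 < G' t i j := fun i j hij =>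
        div_pos (mul_pos (ihpos i j hij) (hv i)) (hrpos i)
      have hcpos : ∀ j, 0 < ∑ i', G' t i' j := by
        intro j
        obtain ⟨i1, hi1⟩ := hScol j
        exact Finset.sum_pos' (fun i _ => hG'0 i j) ⟨i1, Finset.mem_univ i1, hG'pos i1 j hi1⟩
      have hsucc : ∀ i j, G (t + 1) i j =
          if 0 < u j then G' t i j * u j / ((∑ i', G' t i' j) * u j) else G' t i j := by
        intro i j
        show colNorm1 u (G' t) i j = _
        rw [colNorm1, ← Finset.sum_mul]
      refine ⟨?_, ?_, ?_⟩
      · intro i j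
        rw [hsucc]
        split_ifs with hj
        · exact div_nonneg (mul_nonneg (hG'0 i j) (hu j)) (mul_nonneg (hcpos j).le (hu j))
        · exact hG'0 i j
      · intro i j hij
        rw [hsucc]
        split_ifs with hj
        · exact div_pos (mul_pos (hG'pos i j hij) hj) (mul_pos (hcpos j) hj)
        · exact hG'pos i j hij
      · intro j hj
        have : ∀ i, G (t + 1) i j = G' t i j * u j / ((∑ i', G' t i' j) * u j) := by
          intro i; rw [hsucc, if_pos hj]
        rw [Finset.sum_congr rfl (fun i _ => this i)]
        rw [← Finset.sum_div, ← Finset.sum_mul]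
        rw [div_self (mul_pos (hcpos j) hj).ne']
  have hG0 : ∀ t i j, 0 ≤ G t i j := fun t => (hInv t).1
  have hGpos : ∀ t i j, 0 < S i j → 0 < G t i j := fun t => (hInv t).2.1
  have hGcol : ∀ t j, 0 < u j → ∑ i, G t i j = 1 := fun t => (hInv t).2.2
  set r : ℕ → Fin m → ℝ := fun t i => ∑ j', G t i j' * u j' with hrdef
  have hrpos : ∀ t i, 0 < r t i := by
    intro t i
    obtain ⟨j1, hj1u, hj1S⟩ := hrow i
    exact Finset.sum_pos' (fun j _ => mul_nonneg (hG0 t i j) (hu j))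
      ⟨j1, Finset.mem_univ j1, mul_pos (hGpos t i j1 hj1S) hj1u⟩
  have hG'val : ∀ t i j, G' t i j = G t i j * v i / r t i := fun t i j => rfl
  have hG'0 : ∀ t i j, 0 ≤ G' t i j := fun t i j => by
    rw [hG'val]; exact div_nonneg (mul_nonneg (hG0 t i j) (hv i).le) (hrpos t i).le
  have hG'pos : ∀ t i j, 0 < S i j → 0 < G' t i j := fun t i j hij => by
    rw [hG'val]; exact div_pos (mul_pos (hGpos t i j hij) (hv i)) (hrpos t i)
  set c : ℕ → Fin n → ℝ := fun t j => ∑ i, G' t i j with hcdef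
  have hcpos : ∀ t j, 0 < c t j := by
    intro t j
    obtain ⟨i1, hi1⟩ := hScol j
    exact Finset.sum_pos' (fun i _ => hG'0 t i j) ⟨i1, Finset.mem_univ i1, hG'pos t i1 j hi1⟩
  have hGnext : ∀ t j, 0 < u j → ∀ i, G (t + 1) i j = G' t i j / c t j := by
    intro t j hj i
    show colNorm1 u (G' t) i j = _
    rw [colNorm1, if_pos hj, ← Finset.sum_mul]
    exact mul_div_mul_right _ _ hj.ne'
  have hGnext0 : ∀ t j, ¬ (0 < u j) → ∀ i, G (t + 1) i j = G' t i j := by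
    intro t j hj i
    show colNorm1 u (G' t) i j = _
    rw [colNorm1, if_neg hj]
  -- marginal sums
  have hsum_r : ∀ t, ∑ i, r t i = h := by
    intro t
    have h1 : ∑ i, r t i = ∑ j, (∑ i, G t i j) * u j := by
      rw [hrdef, Finset.sum_comm]
      exact Finset.sum_congr rfl fun j _ => (Finset.sum_mul _ _ _).symm
    rw [h1, ← huh]
    apply Finset.sum_congr rfl
    intro j _
    rcases (hu j).lt_or_eq with hj | hj
    · rw [hGcol t j hj, one_mul]
    · rw [← hj, mul_zero]
  have hsum_c : ∀ t, ∑ j, u j * c t j = h := by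
    intro t
    have h1 : ∑ j, u j * c t j = ∑ j, ∑ i, u j * G' t i j := by
      exact Finset.sum_congr rfl fun j _ => Finset.mul_sum _ _ _
    rw [h1, Finset.sum_comm, ← hvh]
    apply Finset.sum_congr rfl
    intro i _
    have h2 : ∀ j, u j * G' t i j = (v i / r t i) * (G t i j * u j) := by
      intro j; rw [hG'val]; ring
    rw [Finset.sum_congr rfl (fun j _ => h2 j), ← Finset.mul_sum]
    have h3 : ∑ j, G t i j * u j = r t i := rfl
    rw [h3, div_mul_cancel₀ _ (hrpos t i).ne']
  set D : ℕ → ℝ := fun t => ∑ j, ∑ i, u j * (Z i j * Real.log (Z i j / G t i j)) with hDdef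
  set KLv : ℕ → ℝ := fun t => ∑ i, v i * Real.log (v i / r t i) with hKLvdef
  set KLu : ℕ → ℝ := fun t => ∑ j, u j * Real.log (u j / (u j * c t j)) with hKLudef
  -- step decomposition
  have hstep : ∀ t, D t = D (t + 1) + (KLv t + KLu t) := by
    intro t
    have key1 : ∀ j i, u j * (Z i j * Real.log (Z i j / G t i j)) =
        u j * (Z i j * Real.log (Z i j / G' t i j)) + Z i j * u j * Real.log (v i / r t i) := by
      intro j i
      by_cases hz : Z i j = 0
      · rw [hz]; ring
      · have hSij := hZpos i j hz
        have hGp : 0 < G t i j := hGpos t i j hSij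
        have hGv : 0 < G t i j * v i / r t i := div_pos (mul_pos hGp (hv i)) (hrpos t i)
        rw [hG'val, Real.log_div hz hGv.ne', Real.log_div hz hGp.ne',
          Real.log_div (hv i).ne' (hrpos t i).ne',
          Real.log_div (mul_pos hGp (hv i)).ne' (hrpos t i).ne',
          Real.log_mul hGp.ne' (hv i).ne']
        ring
    have hstep1 : D t = (∑ j, ∑ i, u j * (Z i j * Real.log (Z i j / G' t i j))) + KLv t := by
      calc D t = ∑ j, ∑ i, (u j * (Z i j * Real.log (Z i j / G' t i j)) +
            Z i j * u j * Real.log (v i / r t i)) := by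
            exact Finset.sum_congr rfl fun j _ => Finset.sum_congr rfl fun i _ => key1 j i
        _ = (∑ j, ∑ i, u j * (Z i j * Real.log (Z i j / G' t i j))) +
            ∑ j, ∑ i, Z i j * u j * Real.log (v i / r t i) := by
            rw [← Finset.sum_add_distrib]
            exact Finset.sum_congr rfl fun j _ => Finset.sum_add_distrib
        _ = (∑ j, ∑ i, u j * (Z i j * Real.log (Z i j / G' t i j))) + KLv t := by
            congr 1
            rw [Finset.sum_comm, hKLvdef]
            apply Finset.sum_congr rfl
            intro i _
            have : ∀ j, Z i j * u j * Real.log (v i / r t i) =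
                Z i j * u j * Real.log (v i / r t i) := fun j => rfl
            rw [← Finset.sum_mul, hZmarg i]
    have hstep2 : (∑ j, ∑ i, u j * (Z i j * Real.log (Z i j / G' t i j)))
        = D (t + 1) + KLu t := by
      rw [hDdef, hKLudef, ← Finset.sum_add_distrib]
      apply Finset.sum_congr rfl
      intro j _
      rcases (hu j).lt_or_eq with hj | hj
      · -- u j > 0
        have hc := hcpos t j
        have key2 : ∀ i, u j * (Z i j * Real.log (Z i j / G' t i j)) =
            u j * (Z i j * Real.log (Z i j / G (t + 1) i j)) -
              Z i j * (u j * Real.log (c t j)) := by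
          intro i
          by_cases hz : Z i j = 0
          · rw [hz]; ring
          · have hG'p : 0 < G' t i j := hG'pos t i j (hZpos i j hz)
            rw [hGnext t j hj i, Real.log_div hz (div_pos hG'p hc).ne',
              Real.log_div hz hG'p.ne', Real.log_div hG'p.ne' hc.ne']
            ring
        rw [Finset.sum_congr rfl (fun i _ => key2 i), Finset.sum_sub_distrib,
          ← Finset.sum_mul, hZcol j, one_mul]
        have hlogc : Real.log (u j / (u j * c t j)) = - Real.log (c t j) := by
          rw [Real.log_div hj.ne' (mul_pos hj hc).ne', Real.log_mul hj.ne' hc.ne']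
          ring
        rw [hlogc]
        ring
      · -- u j = 0
        rw [← hj]
        simp
    rw [hstep1, hstep2]
    ring
  -- nonnegativity of the potential
  have hDnonneg : ∀ t, 0 ≤ D t := by
    intro t
    rw [hDdef]
    apply Finset.sum_nonneg
    intro j _
    rcases (hu j).lt_or_eq with hj | hj
    · rw [← Finset.mul_sum]
      apply mul_nonneg hj.le
      apply sinkhorn_kl_nonneg Finset.univ (fun i => Z i j) (fun i => G t i j)
        (fun i _ => hZ0 i j) (fun i _ => hG0 t i j)
      · intro i _
        by_cases hz : Z i j = 0
        · exact Or.inr hz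
        · exact Or.inl (hGpos t i j (hZpos i j hz))
      · rw [hZcol j, hGcol t j hj]
    · rw [← hj]; simp
  -- Pinsker bounds
  have hPv : ∀ t, (∑ i, |v i - r t i|) ^ 2 ≤ 2 * h * KLv t := by
    intro t
    have hp := sinkhorn_pinsker Finset.univ v (r t) (fun i _ => (hv i).le)
      (fun i _ => (hrpos t i).le) (fun i _ => Or.inl (hrpos t i))
      (by rw [hvh, hsum_r t])
    rw [hsum_r t] at hp
    exact hp
  have hPu : ∀ t, (∑ j, |u j - u j * c t j|) ^ 2 ≤ 2 * h * KLu t := by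
    intro t
    have hp := sinkhorn_pinsker Finset.univ u (fun j => u j * c t j) (fun j _ => hu j)
      (fun j _ => mul_nonneg (hu j) (hcpos t j).le)
      (fun j _ => by
        rcases (hu j).lt_or_eq with hj | hj
        · exact Or.inl (mul_pos hj (hcpos t j))
        · exact Or.inr hj.symm)
      (by rw [huh, hsum_c t])
    rw [hsum_c t] at hp
    exact hp
  have hKLu0 : ∀ t, 0 ≤ KLu t := by
    intro t
    nlinarith [hPu t, sq_nonneg (∑ j, |u j - u j * c t j|), hh]
  have hKLv0 : ∀ t, 0 ≤ KLv t := by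
    intro t
    nlinarith [hPv t, sq_nonneg (∑ i, |v i - r t i|), hh]
  -- telescoping
  have htel : ∀ N : ℕ, D 0 = D N + ∑ t ∈ Finset.range N, (KLv t + KLu t) := by
    intro N
    induction N with
    | zero => simp
    | succ N ih =>
      rw [ih, Finset.sum_range_succ, hstep N]
      ring
  -- bound on the initial potential
  obtain ⟨i0, hi0⟩ := hScol ⟨0, hn⟩
  have hfinall : ({x : ℝ | ∃ i j, S i j = x}).Finite := by
    apply (Set.finite_range (fun p : Fin m × Fin n => S p.1 p.2)).subset
    rintro x ⟨i, j, rfl⟩; exact ⟨(i, j), rfl⟩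
  have hfinpos : ({x : ℝ | 0 < x ∧ ∃ i j, S i j = x}).Finite :=
    hfinall.subset fun x hx => hx.2
  have hnepos : ({x : ℝ | 0 < x ∧ ∃ i j, S i j = x}).Nonempty :=
    ⟨S i0 ⟨0, hn⟩, hi0, i0, ⟨0, hn⟩, rfl⟩
  set a : ℝ := sInf {x : ℝ | 0 < x ∧ ∃ i j, S i j = x} with hadef
  set b : ℝ := sSup {x : ℝ | ∃ i j, S i j = x} with hbdef
  have ha : 0 < a := (hnepos.csInf_mem hfinpos).1
  have hale : ∀ i j, 0 < S i j → a ≤ S i j := fun i j hij =>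
    csInf_le hfinpos.bddBelow ⟨hij, i, j, rfl⟩
  have hble : ∀ i j, S i j ≤ b := fun i j => le_csSup hfinall.bddAbove ⟨i, j, rfl⟩
  have hb : 0 < b := lt_of_lt_of_le hi0 (hble i0 ⟨0, hn⟩)
  have halphab : alphaS S = a / b := rfl
  have hΔ1 : 1 ≤ DeltaS S := by
    haveI : Nonempty {i : Fin m // 0 < S i ⟨0, hn⟩} := ⟨⟨i0, hi0⟩⟩
    have hpos : 0 < Nat.card {i : Fin m // 0 < S i ⟨0, hn⟩} := Nat.card_pos
    refine le_trans hpos ?_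
    show _ ≤ Finset.univ.sup fun j => Nat.card {i : Fin m // 0 < S i j}
    exact Finset.le_sup (f := fun j => Nat.card {i : Fin m // 0 < S i j})
      (Finset.mem_univ (⟨0, hn⟩ : Fin n))
  have hΔbpos : 0 < (DeltaS S : ℝ) * b :=
    mul_pos (by exact_mod_cast Nat.lt_of_lt_of_le Nat.zero_lt_one hΔ1) hb
  have hΔb : ∀ j, ∑ i, S i j ≤ (DeltaS S : ℝ) * b := by
    intro j
    have hsub : ∑ i, S i j = ∑ i ∈ Finset.univ.filter (fun i => 0 < S i j), S i j := by
      symm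
      apply Finset.sum_subset (Finset.filter_subset _ _)
      intro i _ hi
      simp only [Finset.mem_filter, Finset.mem_univ, true_and] at hi
      exact le_antisymm (not_lt.1 hi) (hS i j)
    rw [hsub]
    calc ∑ i ∈ Finset.univ.filter (fun i => 0 < S i j), S i j
        ≤ (Finset.univ.filter (fun i => 0 < S i j)).card • b :=
          Finset.sum_le_card_nsmul _ _ _ (fun i _ => hble i j)
      _ = ((Finset.univ.filter (fun i => 0 < S i j)).card : ℝ) * b := by
          rw [nsmul_eq_mul]
      _ ≤ (DeltaS S : ℝ) * b := by
          apply mul_le_mul_of_nonneg_right _ hb.le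
          have hcardeq : Nat.card {i : Fin m // 0 < S i j} =
              (Finset.univ.filter (fun i => 0 < S i j)).card := by
            rw [Nat.card_eq_fintype_card, Fintype.card_subtype]
          have hle : (Finset.univ.filter (fun i => 0 < S i j)).card ≤ DeltaS S := by
            rw [← hcardeq]
            show _ ≤ Finset.univ.sup fun j => Nat.card {i : Fin m // 0 < S i j}
            exact Finset.le_sup (f := fun j => Nat.card {i : Fin m // 0 < S i j})
              (Finset.mem_univ j)
          exact_mod_cast hle
  have hq0 : 0 < a / ((DeltaS S : ℝ) * b) := div_pos ha hΔbpos
  have hG0low : ∀ i j, 0 < S i j → a / ((DeltaS S : ℝ) * b) ≤ G 0 i j := by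
    intro i j hij
    have hcolpos : 0 < ∑ i', S i' j := by
      obtain ⟨i1, hi1⟩ := hScol j
      exact Finset.sum_pos' (fun i' _ => hS i' j) ⟨i1, Finset.mem_univ i1, hi1⟩
    show _ ≤ S i j / ∑ i', S i' j
    exact div_le_div₀ (hS i j) (hale i j hij) hcolpos (hΔb j)
  set L : ℝ := Real.log (1 + 2 * (DeltaS S : ℝ) / alphaS S) with hLdef
  have hL0 : 0 ≤ L := by
    apply Real.log_nonneg
    have : 0 ≤ 2 * (DeltaS S : ℝ) / alphaS S := by
      rw [halphab]
      positivity
    linarith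
  have hD0 : D 0 ≤ h * L := by
    have hlogle : Real.log ((DeltaS S : ℝ) * b / a) ≤ L := by
      rw [hLdef]
      apply Real.log_le_log (div_pos hΔbpos ha)
      rw [halphab, div_div_eq_mul_div]
      have he : 2 * (DeltaS S : ℝ) * b / a = 2 * ((DeltaS S : ℝ) * b / a) := by ring
      have hx := div_pos hΔbpos ha
      rw [he]
      linarith
    have hterm : ∀ j i, u j * (Z i j * Real.log (Z i j / G 0 i j)) ≤
        u j * (Z i j * Real.log ((DeltaS S : ℝ) * b / a)) := by
      intro j i
      apply mul_le_mul_of_nonneg_left _ (hu j)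
      by_cases hz : Z i j = 0
      · rw [hz]; simp
      · have hzpos : 0 < Z i j := (hZ0 i j).lt_of_ne (Ne.symm hz)
        apply mul_le_mul_of_nonneg_left _ hzpos.le
        have hg := hG0low i j (hZpos i j hz)
        have hgpos : 0 < G 0 i j := lt_of_lt_of_le hq0 hg
        rw [Real.log_div hz hgpos.ne', Real.log_div hΔbpos.ne' ha.ne']
        have h1 : Real.log (Z i j) ≤ 0 := Real.log_nonpos hzpos.le (hZ1 i j)
        have h2 : Real.log (a / ((DeltaS S : ℝ) * b)) ≤ Real.log (G 0 i j) :=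
          Real.log_le_log hq0 hg
        rw [Real.log_div ha.ne' hΔbpos.ne'] at h2
        linarith
    calc D 0 ≤ ∑ j, ∑ i, u j * (Z i j * Real.log ((DeltaS S : ℝ) * b / a)) := by
          rw [hDdef]
          exact Finset.sum_le_sum fun j _ => Finset.sum_le_sum fun i _ => hterm j i
      _ = ∑ j, u j * Real.log ((DeltaS S : ℝ) * b / a) := by
          apply Finset.sum_congr rfl
          intro j _
          rw [← Finset.mul_sum, ← Finset.sum_mul, hZcol j, one_mul]
      _ = h * Real.log ((DeltaS S : ℝ) * b / a) := by
          rw [← Finset.sum_mul, huh]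
      _ ≤ h * L := mul_le_mul_of_nonneg_left hlogle hh.le
  -- final contradiction argument
  by_contra hcon
  push_neg at hcon
  have hB0 : 0 ≤ 2 * h ^ 2 * L / ε ^ 2 := by positivity
  set T : ℕ := Nat.floor (2 * h ^ 2 * L / ε ^ 2) with hTdef
  have hbound : ∀ t : ℕ, t ≤ T → ε ^ 2 / (2 * h) ≤ KLv t + KLu t := by
    intro t ht
    have ht' : (t : ℝ) ≤ 2 * h ^ 2 * L / ε ^ 2 + 1 := by
      have h1 : (t : ℝ) ≤ (T : ℝ) := by exact_mod_cast ht
      have h2 := Nat.floor_le hB0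
      rw [← hTdef] at h2
      linarith
    obtain ⟨h1, h2⟩ := hcon t ht'
    have herrv : ε < ∑ i, |v i - r t i| := by
      refine lt_of_lt_of_le h1 (le_of_eq ?_)
      apply Finset.sum_congr rfl
      intro i _
      exact (abs_sub_comm _ _ : |v i - r t i| = _).symm
    have hsq : ε ^ 2 < (∑ i, |v i - r t i|) ^ 2 :=
      pow_lt_pow_left₀ herrv hε.le (by norm_num)
    have hKv : ε ^ 2 / (2 * h) ≤ KLv t := by
      rw [div_le_iff₀ (by linarith : (0:ℝ) < 2 * h)]
      have := hPv t
      linarith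
    have := hKLu0 t
    linarith
  have hsum_lb : ((T : ℝ) + 1) * (ε ^ 2 / (2 * h)) ≤
      ∑ t ∈ Finset.range (T + 1), (KLv t + KLu t) := by
    have hcard := Finset.card_nsmul_le_sum (Finset.range (T + 1))
      (fun t => KLv t + KLu t) (ε ^ 2 / (2 * h))
      (fun t htm => hbound t (Nat.lt_succ_iff.1 (Finset.mem_range.1 htm)))
    rw [Finset.card_range, nsmul_eq_mul] at hcard
    push_cast at hcard
    linarith
  have hDT := hDnonneg (T + 1)
  have htel' := htel (T + 1)
  have hchain : ((T : ℝ) + 1) * (ε ^ 2 / (2 * h)) ≤ h * L := by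
    have : ∑ t ∈ Finset.range (T + 1), (KLv t + KLu t) ≤ h * L := by linarith
    linarith
  have hTlt : 2 * h ^ 2 * L / ε ^ 2 < (T : ℝ) + 1 := by
    rw [hTdef]; exact Nat.lt_floor_add_one _
  have hfinal : h * L < ((T : ℝ) + 1) * (ε ^ 2 / (2 * h)) := by
    have hpos : 0 < ε ^ 2 / (2 * h) := by positivity
    calc h * L = (2 * h ^ 2 * L / ε ^ 2) * (ε ^ 2 / (2 * h)) := by
          field_simp
      _ < ((T : ℝ) + 1) * (ε ^ 2 / (2 * h)) := mul_lt_mul_of_pos_right hTlt hpos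
  linarith
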